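/- arXiv:1603.01346 — 4 statements merged into one kernel-verified Lean document; each statement's English description precedes it below -/
import Mathlib

section
/- For every a ∈ ℤ^∞ and i ∈ I: ẽ_i(f̃_i a) is defined and equals a; and if σ^{(i)}(a) > 0, then f̃_i(ẽ_i a) = a. (This is the crystal axiom that b' = ẽ_i b if and only if b = f̃_i b' for the crystal structure on ℤ^∞ associated to the sequence (i_k)_{k≥1}.) -/
/-- `σ_k(a) := a_k + Σ_{j > k} ⟨α_{i_j}, h_{i_k}⟩ a_j` for the crystal `ℤ^∞` associated to the
sequence `ι = (i_k)` and the generalized Cartan matrix `C` (where `C i j = ⟨α_j, h_i⟩`). -/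
noncomputable def sigZ {I : Type*} (C : I → I → ℤ) (ι : ℕ → I) (a : ℕ → ℤ) (k : ℕ) : ℤ :=
  a k + ∑ᶠ (j : ℕ) (_ : k < j), C (ι k) (ι j) * a j

/-- `σ^{(i)}(a) := max {σ_k(a) : i_k = i}` (as a supremum in `ℤ`; for finitely supported `a`
this set is nonempty, bounded above, and the maximum is attained). -/
noncomputable def sigMax {I : Type*} (C : I → I → ℤ) (ι : ℕ → I) (a : ℕ → ℤ) (i : I) : ℤ :=
  sSup {x : ℤ | ∃ k : ℕ, ι k = i ∧ sigZ C ι a k = x}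

/-- `M^{(i)}(a) := {k : i_k = i, σ_k(a) = σ^{(i)}(a)}`. -/
noncomputable def Mset {I : Type*} (C : I → I → ℤ) (ι : ℕ → I) (a : ℕ → ℤ) (i : I) : Set ℕ :=
  {k : ℕ | ι k = i ∧ sigZ C ι a k = sigMax C ι a i}

/-- The Kashiwara operator `f̃_i` on `ℤ^∞`: add `1` to the entry in position `min M^{(i)}(a)`. -/
noncomputable def ftilde {I : Type*} (C : I → I → ℤ) (ι : ℕ → I) (i : I) (a : ℕ → ℤ) :
    ℕ → ℤ :=
  fun k => a k + if k = sInf (Mset C ι a i) then 1 else 0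

/-- The Kashiwara operator `ẽ_i` on `ℤ^∞`: subtract `1` from the entry in position
`max M^{(i)}(a)` (this is the definition when `σ^{(i)}(a) > 0`, in which case `M^{(i)}(a)` is
finite and nonempty, so the `sSup` below is its maximum; when `σ^{(i)}(a) = 0` the operator
`ẽ_i` is undefined and this formula is irrelevant). -/
noncomputable def etilde {I : Type*} (C : I → I → ℤ) (ι : ℕ → I) (i : I) (a : ℕ → ℤ) :
    ℕ → ℤ :=
  fun k => a k - if k = sSup (Mset C ι a i) then 1 else 0

private lemma sigZ_eq_sum {I : Type*} (C : I → I → ℤ) (ι : ℕ → I) (a : ℕ → ℤ) (N : ℕ)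
    (hN : ∀ j, N ≤ j → a j = 0) (k : ℕ) :
    sigZ C ι a k = a k + ∑ j ∈ Finset.Ico (k+1) N, C (ι k) (ι j) * a j := by
  unfold sigZ
  congr 1
  apply finsum_cond_eq_sum_of_cond_iff
  intro j hj
  have hjN : j < N := by
    by_contra h
    exact hj (by rw [hN j (le_of_not_gt h)]; ring)
  simp only [Finset.mem_Ico]
  omega

private lemma sigZ_zero_of_ge {I : Type*} (C : I → I → ℤ) (ι : ℕ → I) (a : ℕ → ℤ) (N : ℕ)
    (hN : ∀ j, N ≤ j → a j = 0) (k : ℕ) (hk : N ≤ k) : sigZ C ι a k = 0 := by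
  rw [sigZ_eq_sum C ι a N hN k, hN k hk, Finset.Ico_eq_empty (by omega), Finset.sum_empty]
  ring

private lemma sigZ_add_single {I : Type*} (C : I → I → ℤ) (ι : ℕ → I) (a : ℕ → ℤ) (N : ℕ)
    (hN : ∀ j, N ≤ j → a j = 0) (m : ℕ) (c : ℤ) (hm : m < N) (k : ℕ) :
    sigZ C ι (fun j => a j + if j = m then c else 0) k
      = sigZ C ι a k + (if k = m then c else 0)
        + (if k < m then C (ι k) (ι m) * c else 0) := by
  have hb : ∀ j, N ≤ j → (a j + if j = m then c else 0) = 0 := fun j hj => by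
    rw [hN j hj, if_neg (by omega)]; ring
  rw [sigZ_eq_sum C ι _ N hb k, sigZ_eq_sum C ι a N hN k]
  have h1 : ∑ j ∈ Finset.Ico (k+1) N, C (ι k) (ι j) * (a j + if j = m then c else 0)
      = ∑ j ∈ Finset.Ico (k+1) N,
          (C (ι k) (ι j) * a j + if j = m then C (ι k) (ι m) * c else 0) := by
    refine Finset.sum_congr rfl fun j _ => ?_
    split_ifs with h
    · subst h; ring
    · ring
  rw [h1, Finset.sum_add_distrib, Finset.sum_ite_eq' (Finset.Ico (k+1) N) m
    (fun _ => C (ι k) (ι m) * c)]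
  have hmem : m ∈ Finset.Ico (k+1) N ↔ k < m := by
    simp only [Finset.mem_Ico]; omega
  by_cases h : k < m
  · rw [if_pos (hmem.mpr h), if_pos h]; ring
  · rw [if_neg (fun hh => h (hmem.mp hh)), if_neg h]; ring

private lemma sigMax_spec {I : Type*} (C : I → I → ℤ) (ι : ℕ → I)
    (hinf : ∀ i : I, ∀ N : ℕ, ∃ k, N ≤ k ∧ ι k = i)
    (a : ℕ → ℤ) (N : ℕ) (hN : ∀ j, N ≤ j → a j = 0) (i : I) :
    (∃ k, ι k = i ∧ sigZ C ι a k = sigMax C ι a i) ∧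
    (∀ k, ι k = i → sigZ C ι a k ≤ sigMax C ι a i) ∧
    0 ≤ sigMax C ι a i := by
  set S : Set ℤ := {x : ℤ | ∃ k : ℕ, ι k = i ∧ sigZ C ι a k = x} with hS
  have hsub : S ⊆ insert (0:ℤ) ((Finset.range N).image (sigZ C ι a) : Finset ℤ) := by
    rintro x ⟨k, hk, rfl⟩
    by_cases h : k < N
    · exact Set.mem_insert_iff.2 (Or.inr (by
        simp only [Finset.coe_image, Finset.coe_range, Set.mem_image, Set.mem_Iio]
        exact ⟨k, h, rfl⟩))
    · rw [sigZ_zero_of_ge C ι a N hN k (le_of_not_gt h)]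
      exact Set.mem_insert _ _
  have hfin : S.Finite :=
    Set.Finite.subset (Set.Finite.insert 0 (Finset.finite_toSet _)) hsub
  have h0 : (0:ℤ) ∈ S := by
    obtain ⟨k, hkN, hk⟩ := hinf i N
    exact ⟨k, hk, sigZ_zero_of_ge C ι a N hN k hkN⟩
  have hne : S.Nonempty := ⟨0, h0⟩
  have hmem : sSup S ∈ S := hne.csSup_mem hfin
  refine ⟨hmem, fun k hk => le_csSup hfin.bddAbove ⟨k, hk, rfl⟩, le_csSup hfin.bddAbove h0⟩

/-- For every finitely supported `a ∈ ℤ^∞` and `i ∈ I`: `ẽ_i (f̃_i a)` is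
defined (i.e. `σ^{(i)}(f̃_i a) > 0`) and equals `a`; and if `σ^{(i)}(a) > 0` (so that `ẽ_i a`
is defined), then `f̃_i (ẽ_i a) = a`. -/
theorem stmt_7 {I : Type*} [Fintype I] (C : I → I → ℤ)
    (hCdiag : ∀ i, C i i = 2) (hCoff : ∀ i j, i ≠ j → C i j ≤ 0)
    (ι : ℕ → I) (hne : ∀ k, ι k ≠ ι (k + 1))
    (hinf : ∀ i : I, ∀ N : ℕ, ∃ k, N ≤ k ∧ ι k = i)
    (a : ℕ → ℤ) (ha : ∃ N, ∀ k, N ≤ k → a k = 0) (i : I) :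
    (0 < sigMax C ι (ftilde C ι i a) i ∧ etilde C ι i (ftilde C ι i a) = a) ∧
    (0 < sigMax C ι a i → ftilde C ι i (etilde C ι i a) = a) := by
  obtain ⟨N, hN⟩ := ha
  obtain ⟨⟨k₀, hk₀i, hk₀⟩, hle, hnonneg⟩ := sigMax_spec C ι hinf a N hN i
  constructor
  · -- Part 1
    set m := sInf (Mset C ι a i) with hmdef
    have hMne : (Mset C ι a i).Nonempty := ⟨k₀, hk₀i, hk₀⟩
    have hmM : m ∈ Mset C ι a i := Nat.sInf_mem hMne
    obtain ⟨hιm, hσm⟩ := hmM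
    -- strictness below m
    have hlt : ∀ k, k < m → ι k = i → sigZ C ι a k < sigMax C ι a i := by
      intro k hk hki
      refine lt_of_le_of_ne (hle k hki) fun h => ?_
      have : m ≤ k := Nat.sInf_le (⟨hki, h⟩ : k ∈ Mset C ι a i)
      omega
    set N' := max N (m + 1) with hN'def
    have hN' : ∀ j, N' ≤ j → a j = 0 := fun j hj => hN j (le_trans (le_max_left _ _) hj)
    have hmN' : m < N' := lt_of_lt_of_le (Nat.lt_succ_self m) (le_max_right _ _)
    have hbform : ftilde C ι i a = fun j => a j + if j = m then (1:ℤ) else 0 := rfl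
    set b := ftilde C ι i a with hbdef
    have hbsupp : ∀ j, N' ≤ j → b j = 0 := fun j hj => by
      rw [hbform]
      show a j + (if j = m then (1:ℤ) else 0) = 0
      rw [hN' j hj, if_neg (by omega)]; ring
    have hσb : ∀ k, sigZ C ι b k = sigZ C ι a k + (if k = m then 1 else 0)
        + (if k < m then C (ι k) (ι m) * 1 else 0) := by
      intro k; rw [hbform]; exact sigZ_add_single C ι a N' hN' m 1 hmN' k
    have hσbi : ∀ k, ι k = i → sigZ C ι b k = sigZ C ι a k + (if k = m then 1 else 0)
        + (if k < m then 2 else 0) := by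
      intro k hki
      rw [hσb k, hki, hιm, hCdiag i]
      split_ifs <;> ring
    obtain ⟨⟨k₁, hk₁i, hk₁⟩, hleb, _⟩ := sigMax_spec C ι hinf b N' hbsupp i
    have hmaxb : sigMax C ι b i = sigMax C ι a i + 1 := by
      refine le_antisymm ?_ ?_
      · rw [← hk₁, hσbi k₁ hk₁i]
        rcases lt_trichotomy k₁ m with h | h | h
        · have := hlt k₁ h hk₁i
          rw [if_neg (by omega), if_pos h]; omega
        · subst h; rw [if_pos rfl, if_neg (lt_irrefl _)]; omega
        · have := hle k₁ hk₁i
          rw [if_neg (by omega), if_neg (by omega)]; omega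
      · have := hleb m hιm
        rw [hσbi m hιm, if_pos rfl, if_neg (lt_irrefl _), hσm] at this
        omega
    have hmMb : m ∈ Mset C ι b i := by
      refine ⟨hιm, ?_⟩
      rw [hσbi m hιm, if_pos rfl, if_neg (lt_irrefl _), hσm, hmaxb]; ring
    have hub : ∀ k ∈ Mset C ι b i, k ≤ m := by
      rintro k ⟨hki, hσk⟩
      by_contra h
      have h' : m < k := by omega
      rw [hσbi k hki, if_neg (by omega), if_neg (by omega), hmaxb] at hσk
      have := hle k hki
      omega
    have hsupMb : sSup (Mset C ι b i) = m :=
      le_antisymm (csSup_le ⟨m, hmMb⟩ hub) (le_csSup ⟨m, hub⟩ hmMb)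
    constructor
    · rw [hmaxb]; omega
    · funext k
      show b k - (if k = sSup (Mset C ι b i) then 1 else 0) = a k
      rw [hsupMb, hbform]
      show a k + (if k = m then (1:ℤ) else 0) - (if k = m then 1 else 0) = a k
      by_cases h : k = m <;> simp [h]
  · -- Part 2
    intro hpos
    set M := sSup (Mset C ι a i) with hMdef
    have hMne : (Mset C ι a i).Nonempty := ⟨k₀, hk₀i, hk₀⟩
    have hMbdd : BddAbove (Mset C ι a i) := by
      refine ⟨N, fun k hk => ?_⟩
      by_contra h
      have := sigZ_zero_of_ge C ι a N hN k (by omega)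
      rw [hk.2] at this
      omega
    have hMM : M ∈ Mset C ι a i := Nat.sSup_mem hMne hMbdd
    obtain ⟨hιM, hσM⟩ := hMM
    have hlt : ∀ k, M < k → ι k = i → sigZ C ι a k < sigMax C ι a i := by
      intro k hk hki
      refine lt_of_le_of_ne (hle k hki) fun h => ?_
      have : k ≤ M := le_csSup hMbdd (⟨hki, h⟩ : k ∈ Mset C ι a i)
      omega
    set N' := max N (M + 1) with hN'def
    have hN' : ∀ j, N' ≤ j → a j = 0 := fun j hj => hN j (le_trans (le_max_left _ _) hj)
    have hMN' : M < N' := lt_of_lt_of_le (Nat.lt_succ_self M) (le_max_right _ _)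
    set b := etilde C ι i a with hbdef
    have hbform : b = fun j => a j + if j = M then (-1:ℤ) else 0 := by
      funext j
      show a j - (if j = M then 1 else 0) = _
      split_ifs <;> ring
    have hbsupp : ∀ j, N' ≤ j → b j = 0 := fun j hj => by
      rw [hbform]
      show a j + (if j = M then (-1:ℤ) else 0) = 0
      rw [hN' j hj, if_neg (by omega)]; ring
    have hσbi : ∀ k, ι k = i → sigZ C ι b k = sigZ C ι a k + (if k = M then -1 else 0)
        + (if k < M then -2 else 0) := by
      intro k hki
      rw [hbform, sigZ_add_single C ι a N' hN' M (-1) hMN' k, hki, hιM, hCdiag i]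
      split_ifs <;> ring
    obtain ⟨⟨k₁, hk₁i, hk₁⟩, hleb, _⟩ := sigMax_spec C ι hinf b N' hbsupp i
    have hmaxb : sigMax C ι b i = sigMax C ι a i - 1 := by
      refine le_antisymm ?_ ?_
      · rw [← hk₁, hσbi k₁ hk₁i]
        rcases lt_trichotomy k₁ M with h | h | h
        · have := hle k₁ hk₁i
          rw [if_neg (by omega), if_pos h]; omega
        · subst h; rw [if_pos rfl, if_neg (lt_irrefl _), hσM]; omega
        · have := hlt k₁ h hk₁i
          rw [if_neg (by omega), if_neg (by omega)]; omega
      · have := hleb M hιM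
        rw [hσbi M hιM, if_pos rfl, if_neg (lt_irrefl _), hσM] at this
        omega
    have hMMb : M ∈ Mset C ι b i := by
      refine ⟨hιM, ?_⟩
      rw [hσbi M hιM, if_pos rfl, if_neg (lt_irrefl _), hσM, hmaxb]; ring
    have hlb : ∀ k ∈ Mset C ι b i, M ≤ k := by
      rintro k ⟨hki, hσk⟩
      by_contra h
      have h' : k < M := by omega
      rw [hσbi k hki, if_neg (by omega), if_pos h', hmaxb] at hσk
      have := hle k hki
      omega
    have hinfMb : sInf (Mset C ι b i) = M :=
      le_antisymm (Nat.sInf_le hMMb) (le_csInf ⟨M, hMMb⟩ hlb)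
    funext k
    show b k + (if k = sInf (Mset C ι b i) then 1 else 0) = a k
    rw [hinfMb]
    show a k - (if k = M then 1 else 0) + (if k = M then 1 else 0) = a k
    by_cases h : k = M <;> simp [h]
end

section
/- For every a ∈ ℤ^∞ and i, j ∈ I: σ^{(i)}(f̃_i a) = σ^{(i)}(a) + 1 and the weight satisfies wt(f̃_i a) = wt(a) − α_i (i.e., the coefficient of α_i in −Σ_k a_k α_{i_k} decreases by 1 and the other coefficients are unchanged); moreover, if σ^{(i)}(a) > 0, then σ^{(i)}(ẽ_i a) = σ^{(i)}(a) − 1 and wt(ẽ_i a) = wt(a) + α_i. (These are the crystal axioms ε_i(f̃_i b) = ε_i(b) + 1, wt(f̃_i b) = wt(b) − α_i, ε_i(ẽ_i b) = ε_i(b) − 1 and wt(ẽ_i b) = wt(b) + α_i for the crystal ℤ^∞ associated to the sequence (i_k)_{k≥1}.) -/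
/-- The `I`-tuple of coefficients of the weight `wt(a) = -Σ_k a_k α_{i_k}`: the coefficient of
`α_j` is `-Σ_{k : i_k = j} a_k` (a finite sum since `a` is finitely supported). -/
noncomputable def wtZ {I : Type*} (ι : ℕ → I) (a : ℕ → ℤ) (j : I) : ℤ :=
  -∑ᶠ (k : ℕ) (_ : ι k = j), a k


open Finset in
lemma sig_eq' {I : Type*} (C : I → I → ℤ) (ι : ℕ → I) (a : ℕ → ℤ) {N : ℕ}
    (hN : ∀ k, N ≤ k → a k = 0) (k : ℕ) :
    sigZ C ι a k = a k + ∑ j ∈ Finset.range N, if k < j then C (ι k) (ι j) * a j else 0 := by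
  unfold sigZ
  congr 1
  have h1 : ∀ j, (∑ᶠ _ : k < j, C (ι k) (ι j) * a j) = if k < j then C (ι k) (ι j) * a j else 0 :=
    fun j => finsum_eq_if
  rw [finsum_congr h1]
  apply finsum_eq_sum_of_support_subset
  intro j hj
  simp only [Function.mem_support] at hj
  simp only [Finset.coe_range, Set.mem_Iio]
  by_contra h
  push_neg at h
  rw [hN j (le_trans (by omega) h)] at hj
  simp at hj

lemma sig_zero' {I : Type*} (C : I → I → ℤ) (ι : ℕ → I) (a : ℕ → ℤ) {N : ℕ}
    (hN : ∀ k, N ≤ k → a k = 0) {k : ℕ} (hk : N ≤ k) : sigZ C ι a k = 0 := by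
  rw [sig_eq' C ι a hN k, hN k hk]
  rw [Finset.sum_eq_zero, add_zero]
  intro j hj
  simp only [Finset.mem_range] at hj
  rw [if_neg (by omega)]
lemma sig_perturb {I : Type*} (C : I → I → ℤ) (ι : ℕ → I) (a : ℕ → ℤ) {N : ℕ}
    (hN : ∀ k, N ≤ k → a k = 0) (m : ℕ) (c : ℤ) (k : ℕ) :
    sigZ C ι (fun x => a x + if x = m then c else 0) k
      = sigZ C ι a k + (if k = m then c else 0) + (if k < m then C (ι k) (ι m) * c else 0) := by
  set N' := max N (m + 1) with hN'
  have hNa : ∀ x, N' ≤ x → a x = 0 := fun x hx => hN x (le_trans (le_max_left _ _) hx)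
  have hNb : ∀ x, N' ≤ x → (a x + if x = m then c else 0) = 0 := by
    intro x hx
    rw [hNa x hx, if_neg (by omega)]
    ring
  rw [sig_eq' C ι _ hNb k, sig_eq' C ι a hNa k]
  have hsplit : ∀ j : ℕ, (if k < j then C (ι k) (ι j) * (a j + if j = m then c else 0) else 0)
      = (if k < j then C (ι k) (ι j) * a j else 0)
        + (if j = m then (if k < m then C (ι k) (ι m) * c else 0) else 0) := by
    intro j
    by_cases hjm : j = m
    · subst hjm
      by_cases hkj : k < j <;> simp [hkj] <;> ring
    · by_cases hkj : k < j <;> simp [hkj, hjm]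
  calc a k + (if k = m then c else 0) +
        ∑ j ∈ Finset.range N', (if k < j then C (ι k) (ι j) * (a j + if j = m then c else 0) else 0)
      = a k + (if k = m then c else 0) +
        (∑ j ∈ Finset.range N', ((if k < j then C (ι k) (ι j) * a j else 0)
          + (if j = m then (if k < m then C (ι k) (ι m) * c else 0) else 0))) := by
        rw [Finset.sum_congr rfl (fun j _ => hsplit j)]
    _ = _ := by
        rw [Finset.sum_add_distrib, Finset.sum_ite_eq' (Finset.range N') m
          (fun _ => if k < m then C (ι k) (ι m) * c else 0),
          if_pos (Finset.mem_range.2 (by omega))]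
        ring

lemma wt_eq' {I : Type*} [DecidableEq I] (ι : ℕ → I) (a : ℕ → ℤ) {N : ℕ}
    (hN : ∀ k, N ≤ k → a k = 0) (j : I) :
    wtZ ι a j = -∑ k ∈ Finset.range N, if ι k = j then a k else 0 := by
  unfold wtZ
  congr 1
  have h1 : ∀ k, (∑ᶠ _ : ι k = j, a k) = if ι k = j then a k else 0 := fun k => finsum_eq_if
  rw [finsum_congr h1]
  apply finsum_eq_sum_of_support_subset
  intro k hk
  simp only [Function.mem_support] at hk
  simp only [Finset.coe_range, Set.mem_Iio]
  by_contra h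
  push_neg at h
  rw [hN k h] at hk
  simp at hk

lemma wt_perturb {I : Type*} [DecidableEq I] (ι : ℕ → I) (a : ℕ → ℤ) {N : ℕ}
    (hN : ∀ k, N ≤ k → a k = 0) (m : ℕ) (c : ℤ) (j : I) :
    wtZ ι (fun x => a x + if x = m then c else 0) j
      = wtZ ι a j - (if ι m = j then c else 0) := by
  set N' := max N (m + 1) with hN'
  have hNa : ∀ x, N' ≤ x → a x = 0 := fun x hx => hN x (le_trans (le_max_left _ _) hx)
  have hNb : ∀ x, N' ≤ x → (a x + if x = m then c else 0) = 0 := by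
    intro x hx
    rw [hNa x hx, if_neg (by omega)]
    ring
  rw [wt_eq' ι _ hNb j, wt_eq' ι a hNa j]
  have hsplit : ∀ k : ℕ, (if ι k = j then (a k + if k = m then c else 0) else 0)
      = (if ι k = j then a k else 0) + (if k = m then (if ι m = j then c else 0) else 0) := by
    intro k
    by_cases hkm : k = m
    · subst hkm
      by_cases h : ι k = j <;> simp [h]
    · by_cases h : ι k = j <;> simp [h, hkm]
  rw [Finset.sum_congr rfl (fun k _ => hsplit k), Finset.sum_add_distrib,
    Finset.sum_ite_eq' (Finset.range N') m (fun _ => if ι m = j then c else 0),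
    if_pos (Finset.mem_range.2 (by omega))]
  ring
lemma sigSet_finite {I : Type*} (C : I → I → ℤ) (ι : ℕ → I) (a : ℕ → ℤ) {N : ℕ}
    (hN : ∀ k, N ≤ k → a k = 0) (i : I) :
    {x : ℤ | ∃ k : ℕ, ι k = i ∧ sigZ C ι a k = x}.Finite := by
  apply Set.Finite.subset (Set.Finite.union
    (Set.Finite.image (fun k => sigZ C ι a k) (Set.finite_Iio N)) (Set.finite_singleton 0))
  rintro x ⟨k, _, rfl⟩
  by_cases hk : k < N
  · exact Or.inl ⟨k, hk, rfl⟩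
  · exact Or.inr (by simp [sig_zero' C ι a hN (by omega : N ≤ k)])

lemma sigMax_isGreatest {I : Type*} (C : I → I → ℤ) (ι : ℕ → I)
    (hinf : ∀ i : I, ∀ N : ℕ, ∃ k, N ≤ k ∧ ι k = i)
    (a : ℕ → ℤ) {N : ℕ} (hN : ∀ k, N ≤ k → a k = 0) (i : I) :
    IsGreatest {x : ℤ | ∃ k : ℕ, ι k = i ∧ sigZ C ι a k = x} (sigMax C ι a i) := by
  have hfin := sigSet_finite C ι a hN i
  have hne : {x : ℤ | ∃ k : ℕ, ι k = i ∧ sigZ C ι a k = x}.Nonempty := by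
    obtain ⟨k, -, hk⟩ := hinf i 0
    exact ⟨sigZ C ι a k, k, hk, rfl⟩
  exact ⟨hne.csSup_mem hfin, fun x hx => le_csSup hfin.bddAbove hx⟩

lemma Mset_nonempty {I : Type*} (C : I → I → ℤ) (ι : ℕ → I)
    (hinf : ∀ i : I, ∀ N : ℕ, ∃ k, N ≤ k ∧ ι k = i)
    (a : ℕ → ℤ) {N : ℕ} (hN : ∀ k, N ≤ k → a k = 0) (i : I) :
    (Mset C ι a i).Nonempty := by
  obtain ⟨k, hk, hσ⟩ := (sigMax_isGreatest C ι hinf a hN i).1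
  exact ⟨k, hk, hσ⟩

lemma sigMax_nonneg {I : Type*} (C : I → I → ℤ) (ι : ℕ → I)
    (hinf : ∀ i : I, ∀ N : ℕ, ∃ k, N ≤ k ∧ ι k = i)
    (a : ℕ → ℤ) {N : ℕ} (hN : ∀ k, N ≤ k → a k = 0) (i : I) :
    0 ≤ sigMax C ι a i := by
  obtain ⟨k, hk, hι⟩ := hinf i N
  exact (sigMax_isGreatest C ι hinf a hN i).2 ⟨k, hι, sig_zero' C ι a hN hk⟩
/-- For every finitely supported `a ∈ ℤ^∞` and `i, j ∈ I`:
`σ^{(i)}(f̃_i a) = σ^{(i)}(a) + 1` and `wt(f̃_i a) = wt(a) - α_i` (the coefficient of `α_i`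
decreases by `1`, the other coefficients are unchanged); moreover if `σ^{(i)}(a) > 0` then
`σ^{(i)}(ẽ_i a) = σ^{(i)}(a) - 1` and `wt(ẽ_i a) = wt(a) + α_i`. -/
theorem stmt_8 {I : Type*} [Fintype I] [DecidableEq I] (C : I → I → ℤ)
    (hCdiag : ∀ i, C i i = 2) (hCoff : ∀ i j, i ≠ j → C i j ≤ 0)
    (ι : ℕ → I) (hne : ∀ k, ι k ≠ ι (k + 1))
    (hinf : ∀ i : I, ∀ N : ℕ, ∃ k, N ≤ k ∧ ι k = i)
    (a : ℕ → ℤ) (ha : ∃ N, ∀ k, N ≤ k → a k = 0) (i : I) :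
    (sigMax C ι (ftilde C ι i a) i = sigMax C ι a i + 1) ∧
    (∀ j : I, wtZ ι (ftilde C ι i a) j = wtZ ι a j - if j = i then 1 else 0) ∧
    (0 < sigMax C ι a i →
      (sigMax C ι (etilde C ι i a) i = sigMax C ι a i - 1) ∧
      (∀ j : I, wtZ ι (etilde C ι i a) j = wtZ ι a j + if j = i then 1 else 0)) := by
  classical
  obtain ⟨N, hN⟩ := ha
  have hG := sigMax_isGreatest C ι hinf a hN i
  have hMne := Mset_nonempty C ι hinf a hN i
  set s := sigMax C ι a i with hs
  set m := sInf (Mset C ι a i) with hm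
  obtain ⟨hιm, hσm⟩ : m ∈ Mset C ι a i := Nat.sInf_mem hMne
  have hfeq : ftilde C ι i a = fun x => a x + if x = m then (1:ℤ) else 0 := rfl
  have hpert := sig_perturb C ι a hN m 1
  refine ⟨?_, ?_, ?_⟩
  · -- sigMax of ftilde
    rw [hfeq]
    show sSup _ = s + 1
    apply IsGreatest.csSup_eq
    constructor
    · refine ⟨m, hιm, ?_⟩
      rw [hpert m, if_pos rfl, if_neg (lt_irrefl m), hσm]
      ring
    · rintro x ⟨k, hιk, rfl⟩
      have h3 : sigZ C ι a k ≤ s := hG.2 ⟨k, hιk, rfl⟩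
      rw [hpert k]
      rcases lt_trichotomy k m with h | h | h
      · have h2 : sigZ C ι a k ≠ s := fun he =>
          absurd (Nat.sInf_le (show k ∈ Mset C ι a i from ⟨hιk, he⟩)) (by omega)
        rw [if_neg (by omega), if_pos h, hιk, hιm, hCdiag]
        omega
      · rw [h, if_pos rfl, if_neg (lt_irrefl m), hσm, ← hs]
        omega
      · rw [if_neg (by omega), if_neg (by omega)]
        omega
  · -- wt of ftilde
    intro j
    rw [hfeq, wt_perturb ι a hN m 1 j, hιm]
    congr 1
    by_cases h : j = i
    · simp [h]
    · rw [if_neg (fun he => h he.symm), if_neg h]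
  · -- etilde
    intro hpos
    have hMsub : Mset C ι a i ⊆ Set.Iio N := by
      intro k hk
      by_contra h
      have := sig_zero' C ι a hN (by simpa using h : N ≤ k)
      rw [hk.2] at this
      omega
    have hMfin : (Mset C ι a i).Finite := (Set.finite_Iio N).subset hMsub
    set m' := sSup (Mset C ι a i) with hm'
    obtain ⟨hιm', hσm'⟩ : m' ∈ Mset C ι a i := hMne.csSup_mem hMfin
    have hub : ∀ k ∈ Mset C ι a i, k ≤ m' := fun k hk => le_csSup hMfin.bddAbove hk
    have heeq : etilde C ι i a = fun x => a x + if x = m' then (-1:ℤ) else 0 := by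
      funext x
      simp only [etilde, ← hm']
      split_ifs <;> ring
    have hpert' := sig_perturb C ι a hN m' (-1)
    refine ⟨?_, ?_⟩
    · rw [heeq]
      show sSup _ = s - 1
      apply IsGreatest.csSup_eq
      constructor
      · refine ⟨m', hιm', ?_⟩
        rw [hpert' m', if_pos rfl, if_neg (lt_irrefl m'), hσm']
        ring
      · rintro x ⟨k, hιk, rfl⟩
        have h3 : sigZ C ι a k ≤ s := hG.2 ⟨k, hιk, rfl⟩
        rw [hpert' k]
        rcases lt_trichotomy k m' with h | h | h
        · rw [if_neg (by omega), if_pos h, hιk, hιm', hCdiag]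
          omega
        · rw [h, if_pos rfl, if_neg (lt_irrefl m'), hσm', ← hs]
          omega
        · have h2 : sigZ C ι a k ≠ s := fun he => absurd (hub k ⟨hιk, he⟩) (by omega)
          rw [if_neg (by omega), if_neg (by omega)]
          omega
    · intro j
      rw [heeq, wt_perturb ι a hN m' (-1) j, hιm']
      by_cases h : j = i
      · simp [h]
      · rw [if_neg (fun he => h he.symm), if_neg h]
        ring
end

section
/- Let A ⊆ ℂ[t_3, t_2, t_1] be the ℂ-subalgebra generated by the three polynomials t_1 + t_3, t_2, and t_2·t_3. For a nonzero polynomial f ∈ ℂ[t_3, t_2, t_1], let L(f) = (a_1, a_2, a_3) ∈ ℤ_{≥0}^3 denote the exponent vector (a_k = exponent of t_k) of its leading monomial with respect to the lexicographic order t_1 > t_2 > t_3. Then {L(f) : f ∈ A ∖ {0}} = {(a_1, a_2, a_3) ∈ ℤ_{≥0}^3 : a_2 ≥ a_3}. -/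
/-- `Fin r` is well-founded with respect to `<`; registering this instance makes the
lexicographic linear order on `Lex (Fin r → ℕ)` available to instance resolution. -/
instance finWellFoundedLT (n : ℕ) : WellFoundedLT (Fin n) := inferInstance

/-- The leading exponent (as a vector in `ℕ^3`) of a polynomial in `ℂ[t_3, t_2, t_1]` with
respect to the lexicographic order `t_1 > t_2 > t_3`: the exponent vector (coordinate `i` is
the exponent of `t_{i+1}`) of the monomial with nonzero coefficient whose exponent vector is
lexicographically greatest, comparing the exponent of `t_1` first, then `t_2`, then `t_3`.
Junk value `0` at `f = 0`. -/
noncomputable def leadExp3 (f : MvPolynomial (Fin 3) ℂ) : Fin 3 → ℕ :=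
  if h : f = 0 then 0
  else ofLex (Finset.sup' f.support (MvPolynomial.support_nonempty.mpr h)
    (fun d => toLex (fun i : Fin 3 => d i)))

namespace Stmt11Aux

open MvPolynomial

/- Lex comparison helpers for `Fin 3 → ℕ`. -/
lemma lt0 {a b : Fin 3 → ℕ} (h : a 0 < b 0) : toLex a < toLex b :=
  ⟨0, fun j hj => absurd hj (Fin.not_lt_zero j), h⟩

lemma lt1 {a b : Fin 3 → ℕ} (h0 : a 0 = b 0) (h : a 1 < b 1) : toLex a < toLex b := by
  refine ⟨1, fun j hj => ?_, h⟩
  fin_cases j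
  · exact h0
  · exact absurd hj (by decide)
  · exact absurd hj (by decide)

lemma lt2 {a b : Fin 3 → ℕ} (h0 : a 0 = b 0) (h1 : a 1 = b 1) (h : a 2 < b 2) :
    toLex a < toLex b := by
  refine ⟨2, fun j hj => ?_, h⟩
  fin_cases j
  · exact h0
  · exact h1
  · exact absurd hj (by decide)

lemma le_of_lex {a b : Fin 3 → ℕ}
    (h : a 0 < b 0 ∨ (a 0 = b 0 ∧ (a 1 < b 1 ∨ (a 1 = b 1 ∧ a 2 ≤ b 2)))) :
    toLex a ≤ toLex b := by
  rcases h with h | ⟨h0, h | ⟨h1, h2⟩⟩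
  · exact le_of_lt (lt0 h)
  · exact le_of_lt (lt1 h0 h)
  · rcases lt_or_eq_of_le h2 with h | h
    · exact le_of_lt (lt2 h0 h1 h)
    · refine le_of_eq (congrArg toLex (funext fun i => ?_))
      fin_cases i
      · exact h0
      · exact h1
      · exact h

lemma coe_toLex_inj {u v : Fin 3 →₀ ℕ} (h : toLex (⇑u) = toLex (⇑v)) : u = v :=
  DFunLike.coe_injective (toLex.injective h)

variable {f g : MvPolynomial (Fin 3) ℂ}

lemma leadExp3_eq (hf : f ≠ 0) {d : Fin 3 →₀ ℕ} (hd : d ∈ f.support)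
    (hmax : ∀ e ∈ f.support, toLex (⇑e) ≤ toLex (⇑d)) : leadExp3 f = ⇑d := by
  rw [leadExp3, dif_neg hf]
  have : Finset.sup' f.support (MvPolynomial.support_nonempty.mpr hf)
      (fun d => toLex (fun i : Fin 3 => d i)) = toLex ⇑d :=
    le_antisymm (Finset.sup'_le _ _ hmax) (Finset.le_sup' (f := fun d : Fin 3 →₀ ℕ => toLex (fun i : Fin 3 => d i)) hd)
  rw [this]
  rfl

lemma leadExp3_spec (hf : f ≠ 0) :
    ∃ d ∈ f.support, ⇑d = leadExp3 f ∧ ∀ e ∈ f.support, toLex (⇑e) ≤ toLex (⇑d) := by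
  obtain ⟨d, hd, hmax⟩ :=
    f.support.exists_max_image (fun e => toLex (⇑e)) (support_nonempty.mpr hf)
  exact ⟨d, hd, (leadExp3_eq hf hd hmax).symm, hmax⟩

lemma le_leadExp3 (hf : f ≠ 0) {e : Fin 3 →₀ ℕ} (he : e ∈ f.support) :
    toLex (⇑e) ≤ toLex (leadExp3 f) := by
  obtain ⟨d, hd, hde, hmax⟩ := leadExp3_spec hf
  rw [← hde]; exact hmax e he

lemma leadExp3_mul (hf : f ≠ 0) (hg : g ≠ 0) :
    f * g ≠ 0 ∧ leadExp3 (f * g) = leadExp3 f + leadExp3 g := by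
  obtain ⟨df, hdf, hdfe, hdfmax⟩ := leadExp3_spec hf
  obtain ⟨dg, hdg, hdge, hdgmax⟩ := leadExp3_spec hg
  have hmul : f * g ≠ 0 := mul_ne_zero hf hg
  have hcf : coeff df f ≠ 0 := mem_support_iff.mp hdf
  have hcg : coeff dg g ≠ 0 := mem_support_iff.mp hdg
  have key : coeff (df + dg) (f * g) = coeff df f * coeff dg g := by
    rw [MvPolynomial.coeff_mul]
    apply Finset.sum_eq_single_of_mem (df, dg) (Finset.HasAntidiagonal.mem_antidiagonal.mpr rfl)
    rintro ⟨u, v⟩ huv hne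
    have huv' : u + v = df + dg := Finset.HasAntidiagonal.mem_antidiagonal.mp huv
    by_cases hu : coeff u f = 0
    · rw [hu, zero_mul]
    by_cases hv : coeff v g = 0
    · rw [hv, mul_zero]
    exfalso
    have h1 : toLex (⇑u) ≤ toLex (⇑df) := hdfmax u (mem_support_iff.mpr hu)
    have h2 : toLex (⇑v) ≤ toLex (⇑dg) := hdgmax v (mem_support_iff.mpr hv)
    have hsum : toLex (⇑u) + toLex (⇑v) = toLex (⇑df) + toLex (⇑dg) := by
      rw [← toLex_add, ← toLex_add, ← Finsupp.coe_add, ← Finsupp.coe_add, huv']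
    have hu' : u = df := by
      by_contra hne'
      have hlt : toLex (⇑u) < toLex (⇑df) :=
        lt_of_le_of_ne h1 (fun hh => hne' (coe_toLex_inj hh))
      exact absurd hsum (ne_of_lt (add_lt_add_of_lt_of_le hlt h2))
    have hv' : v = dg := by
      have h := huv'; rw [hu'] at h; exact add_left_cancel h
    exact hne (by rw [hu', hv'])
  have hmem : df + dg ∈ (f * g).support :=
    mem_support_iff.mpr (by rw [key]; exact mul_ne_zero hcf hcg)
  have hmax : ∀ e ∈ (f * g).support, toLex (⇑e) ≤ toLex (⇑(df + dg)) := by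
    intro e he
    have hsub := MvPolynomial.support_mul f g he
    obtain ⟨u, hu, v, hv, rfl⟩ := Finset.mem_add.mp hsub
    rw [Finsupp.coe_add, toLex_add, Finsupp.coe_add, toLex_add]
    exact add_le_add (hdfmax u hu) (hdgmax v hv)
  refine ⟨hmul, ?_⟩
  rw [leadExp3_eq hmul hmem hmax, Finsupp.coe_add, ← hdfe, ← hdge]

lemma leadExp3_one : leadExp3 (1 : MvPolynomial (Fin 3) ℂ) = 0 := by
  have h1 : (1 : MvPolynomial (Fin 3) ℂ) ≠ 0 := one_ne_zero
  have : leadExp3 (1 : MvPolynomial (Fin 3) ℂ) = ⇑(0 : Fin 3 →₀ ℕ) := by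
    apply leadExp3_eq h1
    · exact mem_support_iff.mpr (by rw [coeff_zero_one]; exact one_ne_zero)
    · intro e he
      have hce : coeff e (1 : MvPolynomial (Fin 3) ℂ) ≠ 0 := mem_support_iff.mp he
      rw [MvPolynomial.coeff_one] at hce
      have : e = 0 := by
        by_contra hne
        exact hce (if_neg (fun h => hne h.symm))
      rw [this]
  rw [this, Finsupp.coe_zero]

lemma leadExp3_pow (hf : f ≠ 0) (n : ℕ) :
    f ^ n ≠ 0 ∧ leadExp3 (f ^ n) = fun i => n * leadExp3 f i := by
  induction n with
  | zero =>
    rw [pow_zero]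
    refine ⟨one_ne_zero, ?_⟩
    rw [leadExp3_one]
    funext i; simp
  | succ n ih =>
    obtain ⟨h1, h2⟩ := ih
    have hm := leadExp3_mul h1 hf
    rw [pow_succ]
    refine ⟨hm.1, ?_⟩
    rw [hm.2, h2]
    funext i
    simp only [Pi.add_apply]
    ring

lemma g1_ne : (X 0 + X 2 : MvPolynomial (Fin 3) ℂ) ≠ 0 := by
  intro h
  have : coeff (Finsupp.single (0 : Fin 3) 1) (X 0 + X 2 : MvPolynomial (Fin 3) ℂ) = 0 := by
    rw [h, coeff_zero]
  rw [coeff_add, coeff_X, coeff_X'] at this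
  rw [if_neg (show ¬ (Finsupp.single (2 : Fin 3) 1 = Finsupp.single 0 1) by simp [Finsupp.single_eq_single_iff])] at this
  norm_num at this

lemma g1_lead : leadExp3 (X 0 + X 2 : MvPolynomial (Fin 3) ℂ) = ⇑(Finsupp.single (0 : Fin 3) 1) := by
  apply leadExp3_eq g1_ne
  · apply mem_support_iff.mpr
    rw [coeff_add, coeff_X, coeff_X']
    rw [if_neg (show ¬ (Finsupp.single (2 : Fin 3) 1 = Finsupp.single 0 1) by simp [Finsupp.single_eq_single_iff])]
    norm_num
  · intro e he
    have := MvPolynomial.support_add he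
    rw [support_X, support_X, Finset.mem_union, Finset.mem_singleton, Finset.mem_singleton] at this
    rcases this with rfl | rfl
    · exact le_refl _
    · apply le_of_lex
      left
      simp [Finsupp.single_apply]

lemma g2_lead : leadExp3 (X 1 : MvPolynomial (Fin 3) ℂ) = ⇑(Finsupp.single (1 : Fin 3) 1) := by
  apply leadExp3_eq (X_ne_zero 1)
  · rw [support_X]; exact Finset.mem_singleton_self _
  · intro e he
    rw [support_X, Finset.mem_singleton] at he
    rw [he]

lemma g3_spec : (X 1 * X 2 : MvPolynomial (Fin 3) ℂ) ≠ 0 ∧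
    leadExp3 (X 1 * X 2 : MvPolynomial (Fin 3) ℂ)
      = ⇑(Finsupp.single (1 : Fin 3) 1) + ⇑(Finsupp.single (2 : Fin 3) 1) := by
  have h := leadExp3_mul (X_ne_zero (σ := Fin 3) (R := ℂ) 1) (X_ne_zero 2)
  refine ⟨h.1, ?_⟩
  rw [h.2, g2_lead]
  congr 1
  apply leadExp3_eq (X_ne_zero 2)
  · rw [support_X]; exact Finset.mem_singleton_self _
  · intro e he
    rw [support_X, Finset.mem_singleton] at he
    rw [he]

/-- The "standard monomial" of the subalgebra with prescribed leading exponent. -/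
noncomputable def G (x : Fin 3 → ℕ) : MvPolynomial (Fin 3) ℂ :=
  (X 0 + X 2) ^ (x 0) * X 1 ^ (x 1 - x 2) * (X 1 * X 2) ^ (x 2)

lemma G_spec (x : Fin 3 → ℕ) (hx : x 2 ≤ x 1) : G x ≠ 0 ∧ leadExp3 (G x) = x := by
  obtain ⟨h1, e1⟩ := leadExp3_pow g1_ne (x 0)
  obtain ⟨h2, e2⟩ := leadExp3_pow (X_ne_zero (σ := Fin 3) (R := ℂ) 1) (x 1 - x 2)
  obtain ⟨h3, e3⟩ := leadExp3_pow g3_spec.1 (x 2)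
  have A := leadExp3_mul h1 h2
  have B := leadExp3_mul A.1 h3
  refine ⟨B.1, ?_⟩
  show leadExp3 ((X 0 + X 2) ^ (x 0) * X 1 ^ (x 1 - x 2) * (X 1 * X 2) ^ (x 2)) = x
  rw [B.2, A.2, e1, e2, e3, g1_lead, g2_lead, g3_spec.2]
  funext i
  fin_cases i <;>
    simp [Finsupp.single_apply, Pi.add_apply] <;> omega

lemma G_add {a b : Fin 3 → ℕ} (ha : a 2 ≤ a 1) (hb : b 2 ≤ b 1) :
    G (a + b) = G a * G b := by
  unfold G
  have h : a 1 + b 1 - (a 2 + b 2) = (a 1 - a 2) + (b 1 - b 2) := by omega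
  rw [Pi.add_apply, Pi.add_apply, Pi.add_apply, h, pow_add, pow_add, pow_add]
  ring

noncomputable def S : Set (MvPolynomial (Fin 3) ℂ) := {X 0 + X 2, X 1, X 1 * X 2}

lemma closure_spec : ∀ p ∈ Submonoid.closure S,
    p ≠ 0 ∧ (leadExp3 p) 2 ≤ (leadExp3 p) 1 ∧ G (leadExp3 p) = p := by
  intro p hp
  induction hp using Submonoid.closure_induction with
  | mem x hx =>
    simp only [S, Set.mem_insert_iff, Set.mem_singleton_iff] at hx
    rcases hx with rfl | rfl | rfl
    · refine ⟨g1_ne, ?_, ?_⟩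
      · rw [g1_lead]; simp [Finsupp.single_apply]
      · rw [g1_lead]; unfold G; simp [Finsupp.single_apply]
    · refine ⟨X_ne_zero 1, ?_, ?_⟩
      · rw [g2_lead]; simp [Finsupp.single_apply]
      · rw [g2_lead]; unfold G; simp [Finsupp.single_apply]
    · refine ⟨g3_spec.1, ?_, ?_⟩
      · rw [g3_spec.2]; simp [Finsupp.single_apply]
      · rw [g3_spec.2]; unfold G; simp [Finsupp.single_apply]
  | one =>
    refine ⟨one_ne_zero, ?_, ?_⟩
    · rw [leadExp3_one]; exact le_rfl
    · rw [leadExp3_one]; unfold G; simp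
  | mul x y hx hy ihx ihy =>
    obtain ⟨hx0, hx2, hxG⟩ := ihx
    obtain ⟨hy0, hy2, hyG⟩ := ihy
    have hm := leadExp3_mul hx0 hy0
    refine ⟨hm.1, ?_, ?_⟩
    · rw [hm.2]; exact add_le_add hx2 hy2
    · rw [hm.2, G_add hx2 hy2, hxG, hyG]

lemma mem_adjoin_le (hf : f ∈ Algebra.adjoin ℂ S) (hne : f ≠ 0) :
    (leadExp3 f) 2 ≤ (leadExp3 f) 1 := by
  have hf' : f ∈ Submodule.span ℂ ((Submonoid.closure S : Submonoid _) : Set _) := by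
    rw [← Algebra.adjoin_eq_span]
    exact hf
  obtain ⟨c, hcs, hsum⟩ := Submodule.mem_span_set.mp hf'
  have hspec : ∀ p ∈ c.support, p ≠ 0 ∧ (leadExp3 p) 2 ≤ (leadExp3 p) 1 ∧ G (leadExp3 p) = p :=
    fun p hp => closure_spec p (hcs hp)
  have hsupne : c.support.Nonempty := by
    rcases Finset.eq_empty_or_nonempty c.support with h | h
    · exfalso
      apply hne
      rw [← hsum, Finsupp.sum, h, Finset.sum_empty]
    · exact h
  obtain ⟨p0, hp0, hp0max⟩ := c.support.exists_max_image (fun p => toLex (leadExp3 p)) hsupne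
  obtain ⟨hp0ne, hp0le, hp0G⟩ := hspec p0 hp0
  obtain ⟨d0, hd0, hd0e, hd0max⟩ := leadExp3_spec hp0ne
  have hf_eq : ∀ m, coeff m f = ∑ p ∈ c.support, c p * coeff m p := by
    intro m
    rw [← hsum, Finsupp.sum, coeff_sum]
    exact Finset.sum_congr rfl fun p _ => by rw [coeff_smul]; rfl
  have hcoe : coeff d0 f = c p0 * coeff d0 p0 := by
    rw [hf_eq]
    apply Finset.sum_eq_single_of_mem p0 hp0
    intro p hp hnep
    have hc0 : coeff d0 p = 0 := by
      by_contra hc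
      have h1 : toLex (⇑d0) ≤ toLex (leadExp3 p) :=
        le_leadExp3 (hspec p hp).1 (mem_support_iff.mpr hc)
      have h2 : toLex (leadExp3 p) ≤ toLex (leadExp3 p0) := hp0max p hp
      have h4 : toLex (leadExp3 p0) ≤ toLex (leadExp3 p) := by rw [← hd0e]; exact h1
      have heq : leadExp3 p = leadExp3 p0 := toLex.injective (le_antisymm h2 h4)
      exact hnep (by rw [← (hspec p hp).2.2, ← hp0G, heq])
    rw [hc0, mul_zero]
  have hd0f : d0 ∈ f.support := by
    apply mem_support_iff.mpr
    rw [hcoe]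
    exact mul_ne_zero (Finsupp.mem_support_iff.mp hp0) (mem_support_iff.mp hd0)
  have hmax : ∀ e ∈ f.support, toLex (⇑e) ≤ toLex (⇑d0) := by
    intro e he
    have hce : coeff e f ≠ 0 := mem_support_iff.mp he
    have hex : ∃ p ∈ c.support, coeff e p ≠ 0 := by
      by_contra hnone
      push_neg at hnone
      apply hce
      rw [hf_eq]
      exact Finset.sum_eq_zero fun p hp => by rw [hnone p hp, mul_zero]
    obtain ⟨p, hp, hpe⟩ := hex
    calc toLex (⇑e) ≤ toLex (leadExp3 p) := le_leadExp3 (hspec p hp).1 (mem_support_iff.mpr hpe)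
      _ ≤ toLex (leadExp3 p0) := hp0max p hp
      _ = toLex (⇑d0) := by rw [hd0e]
  have hfl : leadExp3 f = ⇑d0 := leadExp3_eq hne hd0f hmax
  rw [hfl, hd0e]
  exact hp0le

lemma G_mem (x : Fin 3 → ℕ) : G x ∈ Algebra.adjoin ℂ S := by
  have h1 : (X 0 + X 2 : MvPolynomial (Fin 3) ℂ) ∈ Algebra.adjoin ℂ S :=
    Algebra.subset_adjoin (by simp [S])
  have h2 : (X 1 : MvPolynomial (Fin 3) ℂ) ∈ Algebra.adjoin ℂ S :=
    Algebra.subset_adjoin (by simp [S])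
  have h3 : (X 1 * X 2 : MvPolynomial (Fin 3) ℂ) ∈ Algebra.adjoin ℂ S :=
    Algebra.subset_adjoin (by simp [S])
  exact mul_mem (mul_mem (pow_mem h1 _) (pow_mem h2 _)) (pow_mem h3 _)

end Stmt11Aux

open MvPolynomial in
/-- Let `A ⊆ ℂ[t_3, t_2, t_1]` be the `ℂ`-subalgebra generated by
`t_1 + t_3`, `t_2` and `t_2 · t_3` (here `X 0 = t_1`, `X 1 = t_2`, `X 2 = t_3`).  Then the set
of leading exponents (with respect to the lexicographic order `t_1 > t_2 > t_3`) of the nonzero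
elements of `A` is exactly `{(a_1, a_2, a_3) ∈ ℤ_{≥0}^3 : a_2 ≥ a_3}`. -/
theorem stmt_11 :
    {x : Fin 3 → ℕ | ∃ f ∈ Algebra.adjoin ℂ
        ({X 0 + X 2, X 1, X 1 * X 2} : Set (MvPolynomial (Fin 3) ℂ)),
      f ≠ 0 ∧ leadExp3 f = x}
    = {x : Fin 3 → ℕ | x 2 ≤ x 1} := by
  ext x
  simp only [Set.mem_setOf_eq]
  constructor
  · rintro ⟨f, hf, hne, rfl⟩
    exact Stmt11Aux.mem_adjoin_le hf hne
  · intro hx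
    obtain ⟨hne, hlead⟩ := Stmt11Aux.G_spec x hx
    exact ⟨Stmt11Aux.G x, Stmt11Aux.G_mem x, hne, hlead⟩
end

section
/- Take I = {1, 2} with pairings ⟨α_1, h_1⟩ = ⟨α_2, h_2⟩ = 2 and ⟨α_1, h_2⟩ = ⟨α_2, h_1⟩ = −1 (type A_2), and the sequence i_k = 1 for k odd, i_k = 2 for k even. Let a ∈ ℤ^∞ have a_k = 0 for k > 3, with a_1, a_2, a_3 ≥ 0 and a_2 ≥ a_3. Then: (1) ε_1(a) = max{a_3, a_1 − a_2 + 2a_3}; (2) ẽ_1^{max} a is the sequence with entries (min{a_1, a_2 − a_3}, a_2, 0) in positions (1, 2, 3) and 0 elsewhere; (3) ε_2(ẽ_1^{max} a) = a_2; (4) ẽ_2^{max} ẽ_1^{max} a has entries (min{a_1, a_2 − a_3}, 0, 0); and (5) ε_1(ẽ_2^{max} ẽ_1^{max} a) = min{a_1, a_2 − a_3}. Consequently the map η given by η(a) = (ε_1(a), ε_2(ẽ_1^{max} a), ε_1(ẽ_2^{max} ẽ_1^{max} a)) satisfies η(a) = (max{a_3, a_1 − a_2 + 2a_3}, a_2,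 min{a_1, a_2 − a_3}). -/
/-- `ẽ_i^{max} a := ẽ_i^{ε_i(a)} a`. -/
noncomputable def emax {I : Type*} (C : I → I → ℤ) (ι : ℕ → I) (i : I) (a : ℕ → ℤ) :
    ℕ → ℤ :=
  (etilde C ι i)^[(sigMax C ι a i).toNat] a

/-- The Cartan matrix of type `A_2`: `C i j = ⟨α_j, h_i⟩`, with `⟨α_1, h_1⟩ = ⟨α_2, h_2⟩ = 2`
and `⟨α_1, h_2⟩ = ⟨α_2, h_1⟩ = -1`; the index `1` is `(0 : Fin 2)` and `2` is `(1 : Fin 2)`. -/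
def CartanA2 : Fin 2 → Fin 2 → ℤ := fun i j => if i = j then 2 else -1

/-- The alternating sequence `(i_1, i_2, i_3, …) = (1, 2, 1, 2, …)`, indexed here from `0`
(position `k ≥ 1` of the paper is index `k - 1`). -/
def iotaAlt : ℕ → Fin 2 := fun k => if k % 2 = 0 then 0 else 1

section Aux

open Finset in
private lemma sig_formula (b : ℕ → ℤ) (hs : ∀ j : ℕ, 3 ≤ j → b j = 0) (k : ℕ) :
    sigZ CartanA2 iotaAlt b k
      = b k + ∑ j ∈ Finset.range 3,
          (if k < j then CartanA2 (iotaAlt k) (iotaAlt j) * b j else 0) := by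
  unfold sigZ
  congr 1
  have h1 : (fun j => ∑ᶠ (_ : k < j), CartanA2 (iotaAlt k) (iotaAlt j) * b j)
      = fun j => if k < j then CartanA2 (iotaAlt k) (iotaAlt j) * b j else 0 := by
    funext j
    exact finsum_eq_if
  rw [h1]
  apply finsum_eq_sum_of_support_subset
  intro j hj
  simp only [Function.mem_support, ne_eq] at hj
  simp only [Finset.coe_range, Set.mem_Iio]
  by_contra h
  push_neg at h
  rw [hs j h, mul_zero] at hj
  simp at hj

private lemma sig0 (b : ℕ → ℤ) (hs : ∀ j : ℕ, 3 ≤ j → b j = 0) :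
    sigZ CartanA2 iotaAlt b 0 = b 0 - b 1 + 2 * b 2 := by
  rw [sig_formula b hs 0]
  simp [Finset.sum_range_succ, CartanA2, iotaAlt]
  ring

private lemma sig1 (b : ℕ → ℤ) (hs : ∀ j : ℕ, 3 ≤ j → b j = 0) :
    sigZ CartanA2 iotaAlt b 1 = b 1 - b 2 := by
  rw [sig_formula b hs 1]
  simp [Finset.sum_range_succ, CartanA2, iotaAlt]
  ring

private lemma sig2 (b : ℕ → ℤ) (hs : ∀ j : ℕ, 3 ≤ j → b j = 0) :
    sigZ CartanA2 iotaAlt b 2 = b 2 := by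
  rw [sig_formula b hs 2]
  simp [Finset.sum_range_succ, CartanA2, iotaAlt]

private lemma sig_ge3 (b : ℕ → ℤ) (hs : ∀ j : ℕ, 3 ≤ j → b j = 0) (k : ℕ) (hk : 3 ≤ k) :
    sigZ CartanA2 iotaAlt b k = 0 := by
  rw [sig_formula b hs k]
  rw [hs k hk]
  rw [Finset.sum_eq_zero]
  · ring
  intro j hj
  rw [if_neg]
  simp only [Finset.mem_range] at hj
  omega

private lemma iota_eq_zero {k : ℕ} : iotaAlt k = 0 ↔ k % 2 = 0 := by
  unfold iotaAlt
  by_cases h : k % 2 = 0 <;> simp [h]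

private lemma iota_eq_one {k : ℕ} : iotaAlt k = 1 ↔ k % 2 = 1 := by
  unfold iotaAlt
  by_cases h : k % 2 = 0 <;> simp [h] <;> omega

private lemma sigMax_zero (b : ℕ → ℤ) (hs : ∀ j : ℕ, 3 ≤ j → b j = 0) :
    sigMax CartanA2 iotaAlt b 0 = max (b 0 - b 1 + 2 * b 2) (max (b 2) 0) := by
  unfold sigMax
  have hset : {x : ℤ | ∃ k : ℕ, iotaAlt k = 0 ∧ sigZ CartanA2 iotaAlt b k = x}
      = insert (b 0 - b 1 + 2 * b 2) (insert (b 2) {(0 : ℤ)}) := by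
    ext x
    constructor
    · rintro ⟨k, hk, rfl⟩
      rw [iota_eq_zero] at hk
      rcases (by omega : k = 0 ∨ k = 2 ∨ 3 ≤ k) with rfl | rfl | h
      · left; exact sig0 b hs
      · right; left; exact sig2 b hs
      · right; right; exact sig_ge3 b hs k h
    · rintro (rfl | rfl | rfl)
      · exact ⟨0, by decide, sig0 b hs⟩
      · exact ⟨2, by decide, sig2 b hs⟩
      · exact ⟨4, by decide, sig_ge3 b hs 4 (by norm_num)⟩
  rw [hset]
  rw [csSup_insert ((Set.toFinite _).bddAbove)
    ⟨b 2, Set.mem_insert _ _⟩]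
  rw [csSup_insert ((Set.finite_singleton _).bddAbove) ⟨0, rfl⟩]
  rw [csSup_singleton]

private lemma sigMax_one (b : ℕ → ℤ) (hs : ∀ j : ℕ, 3 ≤ j → b j = 0) :
    sigMax CartanA2 iotaAlt b 1 = max (b 1 - b 2) 0 := by
  unfold sigMax
  have hset : {x : ℤ | ∃ k : ℕ, iotaAlt k = 1 ∧ sigZ CartanA2 iotaAlt b k = x}
      = insert (b 1 - b 2) {(0 : ℤ)} := by
    ext x
    constructor
    · rintro ⟨k, hk, rfl⟩
      rw [iota_eq_one] at hk
      rcases (by omega : k = 1 ∨ 3 ≤ k) with rfl | h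
      · left; exact sig1 b hs
      · right; exact sig_ge3 b hs k h
    · rintro (rfl | rfl)
      · exact ⟨1, by decide, sig1 b hs⟩
      · exact ⟨3, by decide, sig_ge3 b hs 3 le_rfl⟩
  rw [hset]
  rw [csSup_insert ((Set.finite_singleton _).bddAbove) ⟨0, rfl⟩]
  rw [csSup_singleton]

end Aux

private lemma msup_two (b : ℕ → ℤ) (hs : ∀ j : ℕ, 3 ≤ j → b j = 0)
    (hpos : 0 < b 2) (hle : b 0 - b 1 + 2 * b 2 ≤ b 2) :
    sSup (Mset CartanA2 iotaAlt b 0) = 2 := by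
  have hmax : sigMax CartanA2 iotaAlt b 0 = b 2 := by
    rw [sigMax_zero b hs]; omega
  apply IsGreatest.csSup_eq
  constructor
  · exact ⟨rfl, by rw [sig2 b hs, hmax]⟩
  · rintro k ⟨hk, hσ⟩
    rw [iota_eq_zero] at hk
    by_contra h
    push_neg at h
    rw [sig_ge3 b hs k (by omega), hmax] at hσ
    omega

private lemma msup_zero (b : ℕ → ℤ) (hs : ∀ j : ℕ, 3 ≤ j → b j = 0)
    (h2 : 0 ≤ b 2) (hlt : b 2 < b 0 - b 1 + 2 * b 2) :
    sSup (Mset CartanA2 iotaAlt b 0) = 0 := by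
  have hmax : sigMax CartanA2 iotaAlt b 0 = b 0 - b 1 + 2 * b 2 := by
    rw [sigMax_zero b hs]; omega
  apply IsGreatest.csSup_eq
  constructor
  · exact ⟨rfl, by rw [sig0 b hs, hmax]⟩
  · rintro k ⟨hk, hσ⟩
    rw [iota_eq_zero] at hk
    by_contra h
    push_neg at h
    rcases (by omega : k = 2 ∨ 3 ≤ k) with rfl | h3
    · rw [sig2 b hs, hmax] at hσ; omega
    · rw [sig_ge3 b hs k h3, hmax] at hσ; omega

private lemma msup_one (b : ℕ → ℤ) (hs : ∀ j : ℕ, 3 ≤ j → b j = 0)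
    (hpos : 0 < b 1 - b 2) :
    sSup (Mset CartanA2 iotaAlt b 1) = 1 := by
  have hmax : sigMax CartanA2 iotaAlt b 1 = b 1 - b 2 := by
    rw [sigMax_one b hs]; omega
  apply IsGreatest.csSup_eq
  constructor
  · exact ⟨rfl, by rw [sig1 b hs, hmax]⟩
  · rintro k ⟨hk, hσ⟩
    rw [iota_eq_one] at hk
    by_contra h
    push_neg at h
    rw [sig_ge3 b hs k (by omega), hmax] at hσ
    omega

private lemma e1_iter (n : ℕ) : ∀ b : ℕ → ℤ, (∀ j : ℕ, 3 ≤ j → b j = 0) → 0 ≤ b 0 → 0 ≤ b 2 →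
    b 2 ≤ b 1 → sigMax CartanA2 iotaAlt b 0 = n →
    (etilde CartanA2 iotaAlt 0)^[n] b
      = fun k => if k = 0 then min (b 0) (b 1 - b 2) else if k = 1 then b 1 else 0 := by
  induction n with
  | zero =>
    intro b hs h0 h2 h21 hmax
    rw [sigMax_zero b hs] at hmax
    rw [Function.iterate_zero_apply]
    funext k
    rcases (by omega : k = 0 ∨ k = 1 ∨ k = 2 ∨ 3 ≤ k) with rfl | rfl | rfl | hk
    · simp only [if_pos rfl]; exact (min_eq_left (by omega)).symm
    · norm_num
    · norm_num; omega
    · rw [if_neg (by omega), if_neg (by omega)]; exact hs k hk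
  | succ n ih =>
    intro b hs h0 h2 h21 hmax
    rw [sigMax_zero b hs] at hmax
    rw [Function.iterate_succ_apply]
    by_cases hcase : b 0 - b 1 + 2 * b 2 ≤ b 2
    · -- decrement position 2
      have hpos : 0 < b 2 := by omega
      have hsup : sSup (Mset CartanA2 iotaAlt b 0) = 2 := msup_two b hs hpos hcase
      have hb' : etilde CartanA2 iotaAlt 0 b = fun k => b k - if k = 2 then 1 else 0 := by
        funext k; simp only [etilde, hsup]
      rw [hb']
      rw [ih _ (fun j hj => by rw [if_neg (by omega)]; simpa using hs j hj)
        (by norm_num; omega) (by norm_num; omega) (by norm_num; omega)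
        (by rw [sigMax_zero _ (fun j hj => by rw [if_neg (by omega)]; simpa using hs j hj)]
            norm_num; omega)]
      funext k
      rcases (by omega : k = 0 ∨ k ≠ 0) with rfl | hk
      · norm_num
        rw [min_eq_left (by omega), min_eq_left (by omega)]
      · simp only [if_neg hk]; norm_num
    · -- decrement position 0
      push_neg at hcase
      have hsup : sSup (Mset CartanA2 iotaAlt b 0) = 0 := msup_zero b hs h2 hcase
      have hb' : etilde CartanA2 iotaAlt 0 b = fun k => b k - if k = 0 then 1 else 0 := by
        funext k; simp only [etilde, hsup]
      rw [hb']
      rw [ih _ (fun j hj => by rw [if_neg (by omega)]; simpa using hs j hj)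
        (by norm_num; omega) (by norm_num; omega) (by norm_num; omega)
        (by rw [sigMax_zero _ (fun j hj => by rw [if_neg (by omega)]; simpa using hs j hj)]
            norm_num; omega)]
      funext k
      rcases (by omega : k = 0 ∨ k ≠ 0) with rfl | hk
      · norm_num
        rw [min_eq_right (by omega), min_eq_right (by omega)]
      · simp only [if_neg hk]; norm_num

private lemma e2_iter (n : ℕ) : ∀ c : ℕ → ℤ, (∀ j : ℕ, 3 ≤ j → c j = 0) → c 2 = 0 →
    sigMax CartanA2 iotaAlt c 1 = n →
    (etilde CartanA2 iotaAlt 1)^[n] c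
      = fun k => if k = 0 then c 0 else if k = 1 then c 1 - n else 0 := by
  induction n with
  | zero =>
    intro c hs hc2 hmax
    rw [sigMax_one c hs] at hmax
    rw [Function.iterate_zero_apply]
    funext k
    rcases (by omega : k = 0 ∨ k = 1 ∨ k = 2 ∨ 3 ≤ k) with rfl | rfl | rfl | hk
    · norm_num
    · norm_num
    · norm_num; exact hc2
    · rw [if_neg (by omega), if_neg (by omega)]; exact hs k hk
  | succ n ih =>
    intro c hs hc2 hmax
    rw [sigMax_one c hs] at hmax
    have hpos : 0 < c 1 - c 2 := by omega
    rw [Function.iterate_succ_apply]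
    have hsup : sSup (Mset CartanA2 iotaAlt c 1) = 1 := msup_one c hs hpos
    have hc' : etilde CartanA2 iotaAlt 1 c = fun k => c k - if k = 1 then 1 else 0 := by
      funext k; simp only [etilde, hsup]
    rw [hc']
    rw [ih _ (fun j hj => by rw [if_neg (by omega)]; simpa using hs j hj)
      (by norm_num; exact hc2)
      (by rw [sigMax_one _ (fun j hj => by rw [if_neg (by omega)]; simpa using hs j hj)]
          norm_num; omega)]
    funext k
    rcases (by omega : k = 0 ∨ k = 1 ∨ (k ≠ 0 ∧ k ≠ 1)) with rfl | rfl | ⟨hk0, hk1⟩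
    · norm_num
    · norm_num; push_cast; ring
    · simp only [if_neg hk0, if_neg hk1]


/-- Type `A_2`, sequence `(1, 2, 1, 2, …)`.  Let `a ∈ ℤ^∞` be supported on
the first three entries `(a_1, a_2, a_3) = (a 0, a 1, a 2)`, with nonnegative entries and
`a_2 ≥ a_3`.  Then `ε_1(a) = max {a_3, a_1 - a_2 + 2 a_3}`; `ẽ_1^{max} a` has entries
`(min {a_1, a_2 - a_3}, a_2, 0)`; `ε_2(ẽ_1^{max} a) = a_2`; `ẽ_2^{max} ẽ_1^{max} a` has
entries `(min {a_1, a_2 - a_3}, 0, 0)`; and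
`ε_1(ẽ_2^{max} ẽ_1^{max} a) = min {a_1, a_2 - a_3}`.  Consequently
`η(a) = (max {a_3, a_1 - a_2 + 2 a_3}, a_2, min {a_1, a_2 - a_3})`. -/
theorem stmt_12 (a : ℕ → ℤ)
    (h1 : 0 ≤ a 0) (h2 : 0 ≤ a 1) (h3 : 0 ≤ a 2) (h23 : a 2 ≤ a 1)
    (hsupp : ∀ k : ℕ, 3 ≤ k → a k = 0) :
    sigMax CartanA2 iotaAlt a 0 = max (a 2) (a 0 - a 1 + 2 * a 2) ∧
    emax CartanA2 iotaAlt 0 a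
      = (fun k : ℕ => if k = 0 then min (a 0) (a 1 - a 2) else if k = 1 then a 1 else 0) ∧
    sigMax CartanA2 iotaAlt (emax CartanA2 iotaAlt 0 a) 1 = a 1 ∧
    emax CartanA2 iotaAlt 1 (emax CartanA2 iotaAlt 0 a)
      = (fun k : ℕ => if k = 0 then min (a 0) (a 1 - a 2) else 0) ∧
    sigMax CartanA2 iotaAlt (emax CartanA2 iotaAlt 1 (emax CartanA2 iotaAlt 0 a)) 0
      = min (a 0) (a 1 - a 2) ∧
    (sigMax CartanA2 iotaAlt a 0,
     sigMax CartanA2 iotaAlt (emax CartanA2 iotaAlt 0 a) 1,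
     sigMax CartanA2 iotaAlt (emax CartanA2 iotaAlt 1 (emax CartanA2 iotaAlt 0 a)) 0)
      = (max (a 2) (a 0 - a 1 + 2 * a 2), a 1, min (a 0) (a 1 - a 2)) := by
  have hmax0 : sigMax CartanA2 iotaAlt a 0 = max (a 2) (a 0 - a 1 + 2 * a 2) := by
    rw [sigMax_zero a hsupp, max_eq_left h3, max_comm]
  have hnn : 0 ≤ sigMax CartanA2 iotaAlt a 0 := by
    rw [hmax0]; exact le_max_of_le_left h3
  have hE1 : emax CartanA2 iotaAlt 0 a
      = fun k : ℕ => if k = 0 then min (a 0) (a 1 - a 2) else if k = 1 then a 1 else 0 := by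
    unfold emax
    exact e1_iter _ a hsupp h1 h3 h23 (Int.toNat_of_nonneg hnn).symm
  have hsf : ∀ j : ℕ, 3 ≤ j →
      (if j = 0 then min (a 0) (a 1 - a 2) else if j = 1 then a 1 else (0:ℤ)) = 0 :=
    fun j hj => by rw [if_neg (by omega), if_neg (by omega)]
  have hmax1 : sigMax CartanA2 iotaAlt (emax CartanA2 iotaAlt 0 a) 1 = a 1 := by
    rw [hE1, sigMax_one _ hsf]
    norm_num
    exact h2
  have hE2 : emax CartanA2 iotaAlt 1 (emax CartanA2 iotaAlt 0 a)
      = fun k : ℕ => if k = 0 then min (a 0) (a 1 - a 2) else 0 := by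
    rw [show emax CartanA2 iotaAlt 1 (emax CartanA2 iotaAlt 0 a)
        = (etilde CartanA2 iotaAlt 1)^[(sigMax CartanA2 iotaAlt
            (emax CartanA2 iotaAlt 0 a) 1).toNat] (emax CartanA2 iotaAlt 0 a) from rfl,
      hmax1, hE1]
    rw [e2_iter (a 1).toNat _ hsf (by norm_num)
      (by rw [sigMax_one _ hsf]; norm_num)]
    funext k
    rcases (by omega : k = 0 ∨ k = 1 ∨ (k ≠ 0 ∧ k ≠ 1)) with rfl | rfl | ⟨hk0, hk1⟩
    · norm_num
    · norm_num
      rw [max_eq_left h2]; ring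
    · simp only [if_neg hk0, if_neg hk1]
  have hsg : ∀ j : ℕ, 3 ≤ j →
      (if j = 0 then min (a 0) (a 1 - a 2) else (0:ℤ)) = 0 :=
    fun j hj => by rw [if_neg (by omega)]
  have hmin : 0 ≤ min (a 0) (a 1 - a 2) := le_min h1 (by omega)
  have hmax2 : sigMax CartanA2 iotaAlt (emax CartanA2 iotaAlt 1 (emax CartanA2 iotaAlt 0 a)) 0
      = min (a 0) (a 1 - a 2) := by
    rw [hE2, sigMax_zero _ hsg]
    norm_num
    exact ⟨h1, h23⟩
  exact ⟨hmax0, hE1, hmax1, hE2, hmax2, by rw [hmax0, hmax1, hmax2]⟩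
end
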